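/- Let $E \subseteq L, M, N \subseteq t^{-1}E$ be lattices in $\mathcal{K}^n$ with images $U_1, U_2, U_3 \subseteq V = t^{-1}E/E \cong F^n$, and $i+j+k = n$. If $g := f^t_{ijk}(L,M,N) = k + \dim(U_1 + U_2)$ achieves the minimum among the eight cut values, then with $P = L + M$ one has $f^t_{i,j+k}(L,P) \leq \dim(U_1+U_2)$, $f^t_{j,i+k}(M,P) \leq \dim(U_1+U_2)$, $f^t_{k,i+j}(N,P) \leq k + \dim(U_1+U_2)$, and $f^t_n(P) = \dim(U_1+U_2)$, hence $f^t_{i,j+k}(L,P) + f^t_{j,i+k}(M,P) + f^t_{k,i+j}(N,P) - 2f^t_n(P) \leq f^t_{ijk}(L,M,N)$. -/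

import Mathlib

noncomputable section

/-- A lattice in `K^n`, `K = F((t))`: a finitely generated `F[[t]]`-submodule
of full rank (it spans `K^n` over `K`). -/
def IsLattice {F : Type*} [Field F] {n : ℕ}
    (L : Submodule (PowerSeries F) (Fin n → LaurentSeries F)) : Prop :=
  L.FG ∧ Submodule.span (LaurentSeries F) (L : Set (Fin n → LaurentSeries F)) = ⊤

/-- The set of values `-val (det (v 0, …, v (n-1)))` over nonzero determinants of
vectors `v m` chosen from the lattices `X m` (column `m` from lattice `X m`). -/
def detValSet {F : Type*} [Field F] {n : ℕ}
    (X : Fin n → Submodule (PowerSeries F) (Fin n → LaurentSeries F)) : Set ℤ :=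
  {z | ∃ v : Fin n → Fin n → LaurentSeries F, (∀ m, v m ∈ X m) ∧
    (Matrix.of fun p m => v m p).det ≠ 0 ∧
    z = -((Matrix.of fun p m => v m p).det).order}

/-- Column pattern for two lattices: the first `i` columns from `X`, the rest
from `Y`; `detValSet (cols2 X Y i)` computes `fᵗ_{i,n-i}(X,Y)`. -/
def cols2 {F : Type*} [Field F] {n : ℕ}
    (X Y : Submodule (PowerSeries F) (Fin n → LaurentSeries F)) (i : ℕ) :
    Fin n → Submodule (PowerSeries F) (Fin n → LaurentSeries F) :=
  fun m => if (m : ℕ) < i then X else Y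

/-- Column pattern for three lattices: first `i` columns from `X`, next `j`
from `Y`, remaining from `Z`; `detValSet (cols3 X Y Z i j)` computes
`fᵗ_{i,j,k}(X,Y,Z)` for `k = n - i - j`. -/
def cols3 {F : Type*} [Field F] {n : ℕ}
    (X Y Z : Submodule (PowerSeries F) (Fin n → LaurentSeries F)) (i j : ℕ) :
    Fin n → Submodule (PowerSeries F) (Fin n → LaurentSeries F) :=
  fun m => if (m : ℕ) < i then X else if (m : ℕ) < i + j then Y else Z

/-- The standard lattice `O^n`. -/
def stdLattice (F : Type*) [Field F] (n : ℕ) :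
    Submodule (PowerSeries F) (Fin n → LaurentSeries F) :=
  Submodule.span (PowerSeries F)
    (Set.range fun i => Pi.single i (1 : LaurentSeries F))

/-- The lattice `t⁻¹E`. -/
def tInvStdLattice (F : Type*) [Field F] (n : ℕ) :
    Submodule (PowerSeries F) (Fin n → LaurentSeries F) :=
  Submodule.span (PowerSeries F)
    (Set.range fun i => Pi.single i (HahnSeries.single (-1) (1 : F)))

/-!
A vector `x ∈ t⁻¹E` splits as `t⁻¹ w + e` with `w = residue x ∈ F^n` and `e ∈ E`. If the
residues of the columns of `A` lie in a subspace `W` of dimension `r`, the residue part of `A`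
factors as `B * C` through `F^r`, and the Schur complement identity
`det (A₀ + B * C) = det [[A₀, -B], [C, 1]]` exhibits `det A` as a determinant in which only `r`
columns have entries of order `-1`, so `-ord det A ≤ r`. Columns with arbitrary residues enlarge
`W` by one dimension each. For `P = L + M` the residues lie in `U₁ + U₂`, which gives the three
upper bounds, and a basis of `F^n` extending one of `U₁ + U₂`, with the vectors of `U₁ + U₂`
scaled by `t⁻¹`, attains `fᵗₙ(P) = dim (U₁ + U₂)`; the final inequality is then arithmetic.
-/

namespace AddValuation

variable {R Γ₀ : Type*} [CommRing R] [LinearOrderedAddCommMonoidWithTop Γ₀] (v : AddValuation R Γ₀)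

theorem map_prod {ι : Type*} (s : Finset ι) (f : ι → R) :
    v (∏ i ∈ s, f i) = ∑ i ∈ s, v (f i) := by
  classical
  induction s using Finset.induction_on with
  | empty => simp
  | insert a s ha ih => rw [Finset.prod_insert ha, Finset.sum_insert ha, v.map_mul, ih]

theorem sum_le_map_det {ι : Type*} [Fintype ι] [DecidableEq ι] (A : Matrix ι ι R)
    (c : ι → Γ₀) (hA : ∀ p m, c m ≤ v (A p m)) : ∑ m, c m ≤ v A.det := by
  rw [Matrix.det_apply]
  refine v.map_le_sum fun σ _ => ?_
  have hprod : ∑ m, c m ≤ v (∏ m, A (σ m) m) := by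
    rw [v.map_prod]
    exact Finset.sum_le_sum fun m _ => hA (σ m) m
  rcases Int.units_eq_one_or (Equiv.Perm.sign σ) with h | h <;> rw [h]
  · rwa [one_smul]
  · rwa [Units.neg_smul, one_smul, v.map_neg]

end AddValuation

section LatticeDeterminants

open HahnSeries

variable {F : Type*} [Field F] {n : ℕ}

def orderAtLeast (F : Type*) [Field F] (n : ℕ) (c : ℤ) :
    Submodule (PowerSeries F) (Fin n → LaurentSeries F) where
  carrier := {x | ∀ p, (c : WithTop ℤ) ≤ (x p).orderTop}
  add_mem' hx hy p := le_trans (le_min (hx p) (hy p)) min_orderTop_le_orderTop_add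
  zero_mem' p := by simp
  smul_mem' f x hx p := by
    have hf : (0 : WithTop ℤ) ≤ (ofPowerSeries ℤ F f).orderTop :=
      le_orderTop_iff_forall.2 fun j hj => by
        rw [PowerSeries.coeff_coe, if_pos (by exact_mod_cast hj)]
    calc (c : WithTop ℤ) = 0 + c := (zero_add _).symm
      _ ≤ (ofPowerSeries ℤ F f).orderTop + (x p).orderTop := add_le_add hf (hx p)
      _ ≤ ((f • x) p).orderTop := orderTop_add_le_mul

theorem pi_single_mem_orderAtLeast (q : Fin n) (c : ℤ) (r : F) :
    Pi.single q (single c r) ∈ orderAtLeast F n c := fun p => by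
  rcases eq_or_ne p q with rfl | h
  · simpa using orderTop_single_le
  · simp [h]

theorem stdLattice_eq_orderAtLeast_zero : stdLattice F n = orderAtLeast F n 0 := by
  refine le_antisymm ((Submodule.span_le).2 ?_) fun x hx => ?_
  · rintro _ ⟨q, rfl⟩
    exact pi_single_mem_orderAtLeast q 0 1
  have hcoe : ∀ p, ofPowerSeries ℤ F (PowerSeries.mk fun k => (x p).coeff k) = x p := by
    intro p
    ext j
    rw [PowerSeries.coeff_coe]
    split_ifs with hj
    · exact (coeff_eq_zero_of_lt_orderTop ((WithTop.coe_lt_coe.2 hj).trans_le (hx p))).symm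
    · rw [PowerSeries.coeff_mk, Int.natAbs_of_nonneg (not_lt.1 hj)]
  refine (Submodule.mem_span_range_iff_exists_fun _).2
    ⟨fun p => PowerSeries.mk fun k => (x p).coeff k, funext fun q => ?_⟩
  simp only [Finset.sum_apply, Pi.smul_apply, Pi.single_apply, smul_ite, smul_zero,
    Finset.sum_ite_eq, Finset.mem_univ, if_true]
  exact (mul_one _).trans (hcoe q)

theorem tInvStdLattice_le_orderAtLeast : tInvStdLattice F n ≤ orderAtLeast F n (-1) :=
  (Submodule.span_le).2 fun _ ⟨q, hq⟩ => hq ▸ pi_single_mem_orderAtLeast q (-1) 1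

/-- The image of a vector of `t⁻¹E` in `t⁻¹E/E ≅ F^n`. -/
def residue (x : Fin n → LaurentSeries F) : Fin n → F := fun p => (x p).coeff (-1)

def tInvVec (u : Fin n → F) : Fin n → LaurentSeries F := fun p => single (-1) (u p)

theorem residue_add (x y : Fin n → LaurentSeries F) :
    residue (x + y) = residue x + residue y :=
  funext fun _ => coeff_add ..

theorem tInvVec_add (u w : Fin n → F) : tInvVec (u + w) = tInvVec u + tInvVec w :=
  funext fun _ => single_add ..

theorem sub_tInvVec_residue_mem_stdLattice {x : Fin n → LaurentSeries F}
    (hx : x ∈ tInvStdLattice F n) : x - tInvVec (residue x) ∈ stdLattice F n := by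
  rw [stdLattice_eq_orderAtLeast_zero]
  intro p
  refine le_orderTop_iff_forall.2 fun j hj => ?_
  rcases eq_or_ne j (-1) with rfl | hj1
  · simp [tInvVec, residue]
  · have hj' : j < -1 := by have := WithTop.coe_lt_coe.1 hj; omega
    have hlt : (j : WithTop ℤ) < (x p).orderTop :=
      (WithTop.coe_lt_coe.2 hj').trans_le (tInvStdLattice_le_orderAtLeast hx p)
    simp [tInvVec, coeff_eq_zero_of_lt_orderTop hlt, coeff_single_of_ne hj1]

section Residues

variable {X Y : Submodule (PowerSeries F) (Fin n → LaurentSeries F)}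
  {U V : Submodule F (Fin n → F)}

theorem residue_mem {x : Fin n → LaurentSeries F} (hEX : stdLattice F n ≤ X)
    (hXt : X ≤ tInvStdLattice F n) (hU : ∀ u, u ∈ U ↔ tInvVec u ∈ X) (hx : x ∈ X) :
    residue x ∈ U :=
  (hU _).2 <| by simpa using X.sub_mem hx (hEX (sub_tInvVec_residue_mem_stdLattice (hXt hx)))

theorem residue_mem_sup {x : Fin n → LaurentSeries F}
    (hEX : stdLattice F n ≤ X) (hXt : X ≤ tInvStdLattice F n) (hU : ∀ u, u ∈ U ↔ tInvVec u ∈ X)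
    (hEY : stdLattice F n ≤ Y) (hYt : Y ≤ tInvStdLattice F n) (hV : ∀ u, u ∈ V ↔ tInvVec u ∈ Y)
    (hx : x ∈ X ⊔ Y) : residue x ∈ U ⊔ V := by
  obtain ⟨a, ha, b, hb, rfl⟩ := Submodule.mem_sup.1 hx
  rw [residue_add]
  exact Submodule.add_mem_sup (residue_mem hEX hXt hU ha) (residue_mem hEY hYt hV hb)

theorem tInvVec_mem_sup (hU : ∀ u, u ∈ U ↔ tInvVec u ∈ X) (hV : ∀ u, u ∈ V ↔ tInvVec u ∈ Y)
    {u : Fin n → F} (hu : u ∈ U ⊔ V) : tInvVec u ∈ X ⊔ Y := by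
  obtain ⟨a, ha, b, hb, rfl⟩ := Submodule.mem_sup.1 hu
  rw [tInvVec_add]
  exact Submodule.add_mem_sup ((hU a).1 ha) ((hV b).1 hb)

end Residues

theorem neg_card_le_orderTop_det_add_mul {ι κ : Type*} [Fintype ι] [DecidableEq ι] [Fintype κ]
    [DecidableEq κ] (A : Matrix ι ι (LaurentSeries F)) (B : Matrix ι κ (LaurentSeries F))
    (C : Matrix κ ι (LaurentSeries F)) (hA : ∀ p m, 0 ≤ (A p m).orderTop)
    (hB : ∀ p l, ((-1 : ℤ) : WithTop ℤ) ≤ (B p l).orderTop) (hC : ∀ l m, 0 ≤ (C l m).orderTop) :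
    ((-Fintype.card κ : ℤ) : WithTop ℤ) ≤ (A + B * C).det.orderTop := by
  have hdet : (A + B * C).det = (Matrix.fromBlocks A (-B) C 1).det := by
    rw [Matrix.det_fromBlocks_one₂₂, Matrix.neg_mul, sub_neg_eq_add]
  let c : ι ⊕ κ → ℤ := Sum.elim 0 (-1)
  have hentries : ∀ p m, (c m : WithTop ℤ) ≤ (Matrix.fromBlocks A (-B) C 1 p m).orderTop := by
    rintro (p | l) (m | l')
    · exact hA p m
    · rw [Matrix.fromBlocks_apply₁₂, Matrix.neg_apply, orderTop_neg]
      exact hB p l'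
    · exact hC l m
    · rw [Matrix.fromBlocks_apply₂₂, Matrix.one_apply]
      split_ifs
      · rw [orderTop_one]
        exact WithTop.coe_le_coe.2 (show (-1 : ℤ) ≤ 0 by norm_num)
      · rw [orderTop_zero]
        exact le_top
  have hsum : ∑ m, c m = -Fintype.card κ := by simp [c, Fintype.sum_sum_type]
  have hval := (addVal ℤ F).sum_le_map_det _ (fun m => (c m : WithTop ℤ)) hentries
  rwa [← WithTop.coe_sum, hsum, ← hdet, addVal_apply] at hval

theorem neg_order_det_le_finrank {v : Fin n → Fin n → LaurentSeries F}
    (hv : ∀ m, v m ∈ tInvStdLattice F n) {W : Submodule F (Fin n → F)}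
    (hW : ∀ m, residue (v m) ∈ W) (hdet : (Matrix.of fun p m => v m p).det ≠ 0) :
    -(Matrix.of fun p m => v m p).det.order ≤ Module.finrank F W := by
  set A : Matrix (Fin n) (Fin n) (LaurentSeries F) := Matrix.of fun p m => v m p
  let b := Module.finBasis F W
  let B : Matrix (Fin n) (Fin (Module.finrank F W)) (LaurentSeries F) :=
    Matrix.of fun p l => tInvVec (b l : Fin n → F) p
  let C : Matrix (Fin (Module.finrank F W)) (Fin n) (LaurentSeries F) :=
    Matrix.of fun l m => HahnSeries.C (b.repr ⟨_, hW m⟩ l)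
  have hBC : ∀ m, (fun p => (B * C) p m) = tInvVec (residue (v m)) := by
    intro m
    funext p
    have hsum := congrFun (congrArg Subtype.val (b.sum_repr ⟨_, hW m⟩)) p
    simp only [Submodule.coe_sum, Submodule.coe_smul, Finset.sum_apply, Pi.smul_apply,
      smul_eq_mul] at hsum
    simp only [Matrix.mul_apply, B, C, Matrix.of_apply, tInvVec, C_apply, single_mul_single,
      add_zero, ← hsum, mul_comm (b.repr _ _)]
    exact (map_sum (single.addMonoidHom (-1)) _ _).symm
  have hA : ∀ p m, 0 ≤ ((A - B * C) p m).orderTop := fun p m => by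
    have hcol := sub_tInvVec_residue_mem_stdLattice (hv m)
    rw [stdLattice_eq_orderAtLeast_zero, ← hBC m] at hcol
    exact hcol p
  have hval := neg_card_le_orderTop_det_add_mul (A - B * C) B C hA
    (fun _ _ => orderTop_single_le) (fun _ _ => orderTop_single_le)
  rw [sub_add_cancel, ← order_eq_orderTop_of_ne_zero hdet, WithTop.coe_le_coe,
    Fintype.card_fin] at hval
  omega

theorem neg_order_det_le_card_add_finrank {v : Fin n → Fin n → LaurentSeries F}
    (hv : ∀ m, v m ∈ tInvStdLattice F n) {W : Submodule F (Fin n → F)} (s : Finset (Fin n))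
    (hW : ∀ m ∉ s, residue (v m) ∈ W) (hdet : (Matrix.of fun p m => v m p).det ≠ 0) :
    -(Matrix.of fun p m => v m p).det.order ≤ s.card + Module.finrank F W := by
  classical
  let S := Submodule.span F (s.image fun m => residue (v m) : Set (Fin n → F))
  have hWS : ∀ m, residue (v m) ∈ W ⊔ S := fun m => by
    by_cases hm : m ∈ s
    · exact Submodule.mem_sup_right (Submodule.subset_span (Finset.mem_image_of_mem _ hm))
    · exact Submodule.mem_sup_left (hW m hm)
  have hS : Module.finrank F S ≤ s.card :=
    (finrank_span_finset_le_card _).trans Finset.card_image_le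
  have hrank := Submodule.finrank_add_le_finrank_add_finrank W S
  have := neg_order_det_le_finrank hv hWS hdet
  omega

theorem le_card_add_finrank_of_mem_detValSet
    {X : Fin n → Submodule (PowerSeries F) (Fin n → LaurentSeries F)}
    (hX : ∀ m, X m ≤ tInvStdLattice F n) {W : Submodule F (Fin n → F)} (s : Finset (Fin n))
    (hW : ∀ m ∉ s, ∀ x ∈ X m, residue x ∈ W) {z : ℤ} (hz : z ∈ detValSet X) :
    z ≤ s.card + Module.finrank F W := by
  obtain ⟨v, hvX, hdet, rfl⟩ := hz
  exact neg_order_det_le_card_add_finrank (fun m => hX m (hvX m)) s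
    (fun m hm => hW m hm _ (hvX m)) hdet

theorem prod_single_one {ι : Type*} (s : Finset ι) (e : ι → ℤ) :
    ∏ m ∈ s, (single (e m) (1 : F) : LaurentSeries F) = single (∑ m ∈ s, e m) 1 := by
  classical
  induction s using Finset.induction_on with
  | empty => simp
  | insert a s ha ih =>
    rw [Finset.prod_insert ha, Finset.sum_insert ha, ih, single_mul_single, one_mul]

theorem det_of_single_cols {ι : Type*} [Fintype ι] [DecidableEq ι] (P : Matrix ι ι F) (e : ι → ℤ) :
    (Matrix.of fun p m => (single (e m) (P p m) : LaurentSeries F)).det =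
      single (∑ m, e m) P.det := by
  have hfactor : (Matrix.of fun p m => (single (e m) (P p m) : LaurentSeries F)) =
      P.map HahnSeries.C * Matrix.diagonal fun m => single (e m) 1 := by
    ext p m
    simp [Matrix.mul_diagonal, C_apply, single_mul_single]
  rw [hfactor, Matrix.det_mul, Matrix.det_diagonal, ← RingHom.mapMatrix_apply, ← RingHom.map_det,
    prod_single_one, C_apply, single_mul_single, zero_add, mul_one]

theorem exists_det_ne_zero_card_eq_finrank (U : Submodule F (Fin n → F)) :
    ∃ (P : Matrix (Fin n) (Fin n) F) (S : Finset (Fin n)),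
      P.det ≠ 0 ∧ S.card = Module.finrank F U ∧ ∀ m ∈ S, (fun p => P p m) ∈ U := by
  obtain ⟨U', hU'⟩ := Submodule.exists_isCompl U
  let b₀ := ((Module.finBasis F U).prod (Module.finBasis F U')).map
    (Submodule.prodEquivOfIsCompl U U' hU')
  let e := b₀.indexEquiv (Pi.basisFun F (Fin n))
  let b := b₀.reindex e
  refine ⟨(Pi.basisFun F (Fin n)).toMatrix b,
    Finset.univ.map (Function.Embedding.inl.trans e.toEmbedding), ?_, by simp, ?_⟩
  · rw [← Module.Basis.det_apply]
    exact (Module.Basis.isUnit_det _ _).ne_zero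
  · intro m hm
    obtain ⟨l, -, rfl⟩ := Finset.mem_map.1 hm
    simp [b, b₀, Module.Basis.toMatrix_apply]

theorem finrank_mem_detValSet {X : Submodule (PowerSeries F) (Fin n → LaurentSeries F)}
    (hEX : stdLattice F n ≤ X) {U : Submodule F (Fin n → F)} (hU : ∀ u ∈ U, tInvVec u ∈ X) :
    (Module.finrank F U : ℤ) ∈ detValSet fun _ => X := by
  classical
  obtain ⟨P, S, hP, hS, hPU⟩ := exists_det_ne_zero_card_eq_finrank U
  let e : Fin n → ℤ := fun m => if m ∈ S then -1 else 0
  have hdet := det_of_single_cols P e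
  have hsum : ∑ m, e m = -S.card := by simp [e, Finset.sum_ite_mem]
  refine ⟨fun m p => single (e m) (P p m), fun m => ?_, ?_, ?_⟩
  · by_cases hm : m ∈ S
    · simp only [e, if_pos hm]
      exact hU _ (hPU m hm)
    · refine hEX ?_
      rw [stdLattice_eq_orderAtLeast_zero]
      intro p
      simp only [e, if_neg hm]
      exact orderTop_single_le
  · rw [hdet]
    exact single_ne_zero hP
  · rw [hdet, order_single hP, hsum, hS, neg_neg]

theorem cols2_le {X Y Z : Submodule (PowerSeries F) (Fin n → LaurentSeries F)}
    (hX : X ≤ Z) (hY : Y ≤ Z) (i : ℕ) (m : Fin n) : cols2 X Y i m ≤ Z := by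
  unfold cols2
  split_ifs
  exacts [hX, hY]

theorem cols2_of_not_lt {X Y : Submodule (PowerSeries F) (Fin n → LaurentSeries F)} {i : ℕ}
    {m : Fin n} (h : ¬(m : ℕ) < i) : cols2 X Y i m = Y :=
  if_neg h

end LatticeDeterminants

theorem close_lattices_cut_LM_general {F : Type*} [Field F] {n : ℕ} (i j k : ℕ)
    (L M N : Submodule (PowerSeries F) (Fin n → LaurentSeries F))
    (hEL : stdLattice F n ≤ L) (hEM : stdLattice F n ≤ M)
    (hLt : L ≤ tInvStdLattice F n) (hMt : M ≤ tInvStdLattice F n)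
    (hNt : N ≤ tInvStdLattice F n)
    (U₁ U₂ : Submodule F (Fin n → F))
    (hU₁ : ∀ u : Fin n → F, u ∈ U₁ ↔
      (fun p => (HahnSeries.single (-1) (u p) : LaurentSeries F)) ∈ L)
    (hU₂ : ∀ u : Fin n → F, u ∈ U₂ ↔
      (fun p => (HahnSeries.single (-1) (u p) : LaurentSeries F)) ∈ M)
    (g : ℤ)
    (hgval : g = (k : ℤ) + Module.finrank F ↥(U₁ ⊔ U₂)) :
    (∀ z ∈ detValSet (cols2 L (L ⊔ M) i), z ≤ (Module.finrank F ↥(U₁ ⊔ U₂) : ℤ)) ∧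
    (∀ z ∈ detValSet (cols2 M (L ⊔ M) j), z ≤ (Module.finrank F ↥(U₁ ⊔ U₂) : ℤ)) ∧
    (∀ z ∈ detValSet (cols2 N (L ⊔ M) k),
      z ≤ (k : ℤ) + Module.finrank F ↥(U₁ ⊔ U₂)) ∧
    IsGreatest (detValSet (fun _ : Fin n => L ⊔ M))
      ((Module.finrank F ↥(U₁ ⊔ U₂) : ℤ)) ∧
    (∀ fLP fMP fNP fP : ℤ,
      IsGreatest (detValSet (cols2 L (L ⊔ M) i)) fLP →
      IsGreatest (detValSet (cols2 M (L ⊔ M) j)) fMP →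
      IsGreatest (detValSet (cols2 N (L ⊔ M) k)) fNP →
      IsGreatest (detValSet (fun _ : Fin n => L ⊔ M)) fP →
      fLP + fMP + fNP - 2 * fP ≤ g) := by
  have hPt : L ⊔ M ≤ tInvStdLattice F n := sup_le hLt hMt
  have hres : ∀ x ∈ L ⊔ M, residue x ∈ U₁ ⊔ U₂ :=
    fun x hx => residue_mem_sup hEL hLt hU₁ hEM hMt hU₂ hx
  have hle : ∀ X : Fin n → Submodule (PowerSeries F) (Fin n → LaurentSeries F),
      (∀ m, X m ≤ L ⊔ M) → ∀ z ∈ detValSet X, z ≤ Module.finrank F ↥(U₁ ⊔ U₂) :=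
    fun X hX z hz => by
      simpa using le_card_add_finrank_of_mem_detValSet (fun m => (hX m).trans hPt) ∅
        (fun m _ x hx => hres x (hX m hx)) hz
  have hL := hle _ (cols2_le le_sup_left le_rfl i)
  have hM := hle _ (cols2_le le_sup_right le_rfl j)
  have hN : ∀ z ∈ detValSet (cols2 N (L ⊔ M) k), z ≤ k + Module.finrank F ↥(U₁ ⊔ U₂) :=
    fun z hz => (le_card_add_finrank_of_mem_detValSet (cols2_le hNt hPt k) {m | m < k}
      (fun m hm x hx => hres x (by simpa [cols2_of_not_lt (by simpa using hm)] using hx)) hz).trans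
      (by simp [Fin.card_filter_val_lt])
  have hP : IsGreatest (detValSet fun _ : Fin n => L ⊔ M) (Module.finrank F ↥(U₁ ⊔ U₂)) :=
    ⟨finrank_mem_detValSet (hEL.trans le_sup_left) fun _ hu => tInvVec_mem_sup hU₁ hU₂ hu,
      hle _ fun _ => le_rfl⟩
  refine ⟨hL, hM, hN, hP, fun fLP fMP fNP fP hLP hMP hNP hfP => ?_⟩
  have := hL _ hLP.1
  have := hM _ hMP.1
  have := hN _ hNP.1
  rw [hfP.unique hP]
  omega

/-- The case `P = L + M` of the proof of the main theorem for close lattices: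
if the cut value `k + dim(U₁+U₂)` achieves `fᵗ_{ijk}(L,M,N)`, then the four
bounds `fᵗ_{i,j+k}(L,P) ≤ dim(U₁+U₂)`, `fᵗ_{j,i+k}(M,P) ≤ dim(U₁+U₂)`,
`fᵗ_{k,i+j}(N,P) ≤ k + dim(U₁+U₂)` and `fᵗₙ(P) = dim(U₁+U₂)` hold, whence
`fᵗ_{i,j+k}(L,P) + fᵗ_{j,i+k}(M,P) + fᵗ_{k,i+j}(N,P) - 2fᵗₙ(P) ≤ fᵗ_{ijk}(L,M,N)`. -/
theorem close_lattices_cut_LM {F : Type*} [Field F] {n : ℕ} (i j k : ℕ)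
    (hijk : i + j + k = n)
    (L M N : Submodule (PowerSeries F) (Fin n → LaurentSeries F))
    (hEL : stdLattice F n ≤ L) (hEM : stdLattice F n ≤ M) (hEN : stdLattice F n ≤ N)
    (hLt : L ≤ tInvStdLattice F n) (hMt : M ≤ tInvStdLattice F n)
    (hNt : N ≤ tInvStdLattice F n)
    (U₁ U₂ U₃ : Submodule F (Fin n → F))
    (hU₁ : ∀ u : Fin n → F, u ∈ U₁ ↔
      (fun p => (HahnSeries.single (-1) (u p) : LaurentSeries F)) ∈ L)
    (hU₂ : ∀ u : Fin n → F, u ∈ U₂ ↔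
      (fun p => (HahnSeries.single (-1) (u p) : LaurentSeries F)) ∈ M)
    (hU₃ : ∀ u : Fin n → F, u ∈ U₃ ↔
      (fun p => (HahnSeries.single (-1) (u p) : LaurentSeries F)) ∈ N)
    (g : ℤ) (hg : IsGreatest (detValSet (cols3 L M N i j)) g)
    (hgval : g = (k : ℤ) + Module.finrank F ↥(U₁ ⊔ U₂))
    (hmin1 : g ≤ ((i : ℤ) + j + k))
    (hmin2 : g ≤ (j : ℤ) + k + Module.finrank F ↥U₁)
    (hmin3 : g ≤ (i : ℤ) + k + Module.finrank F ↥U₂)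
    (hmin4 : g ≤ (i : ℤ) + j + Module.finrank F ↥U₃)
    (hmin5 : g ≤ (j : ℤ) + Module.finrank F ↥(U₁ ⊔ U₃))
    (hmin6 : g ≤ (i : ℤ) + Module.finrank F ↥(U₂ ⊔ U₃))
    (hmin7 : g ≤ (Module.finrank F ↥(U₁ ⊔ U₂ ⊔ U₃) : ℤ)) :
    (∀ z ∈ detValSet (cols2 L (L ⊔ M) i), z ≤ (Module.finrank F ↥(U₁ ⊔ U₂) : ℤ)) ∧
    (∀ z ∈ detValSet (cols2 M (L ⊔ M) j), z ≤ (Module.finrank F ↥(U₁ ⊔ U₂) : ℤ)) ∧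
    (∀ z ∈ detValSet (cols2 N (L ⊔ M) k),
      z ≤ (k : ℤ) + Module.finrank F ↥(U₁ ⊔ U₂)) ∧
    IsGreatest (detValSet (fun _ : Fin n => L ⊔ M))
      ((Module.finrank F ↥(U₁ ⊔ U₂) : ℤ)) ∧
    (∀ fLP fMP fNP fP : ℤ,
      IsGreatest (detValSet (cols2 L (L ⊔ M) i)) fLP →
      IsGreatest (detValSet (cols2 M (L ⊔ M) j)) fMP →
      IsGreatest (detValSet (cols2 N (L ⊔ M) k)) fNP →
      IsGreatest (detValSet (fun _ : Fin n => L ⊔ M)) fP →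
      fLP + fMP + fNP - 2 * fP ≤ g) :=
  close_lattices_cut_LM_general i j k L M N hEL hEM hLt hMt hNt U₁ U₂ hU₁ hU₂ g hgval

end
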